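/- arXiv:1610.09472 — 3 statements merged into one kernel-verified Lean document; each statement's English description precedes it below -/
import Mathlib

section
/- Let ξ be a nondegenerate real random variable with E[ξ] = 0 satisfying Cramér's condition [C₀]. Then there exists a constant c > 0 such that for every α ∈ ℝ, the deviation function satisfies Λ(α) ≥ c · min{α², |α|}. -/
/-!
Cramér's condition makes the cumulant generating function at most quadratic near the origin:
from `e^y ≤ 1 + y + y² e^{|y|}` and `E ξ = 0` one gets, for `|t| ≤ δ/2`,
`log E e^{tξ} ≤ E e^{tξ} - 1 ≤ M t²` with `M = E[ξ² e^{δ|ξ|/2}] < ∞`.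
Hence `Λ(α) ≥ tα - (M + 1) t²` for all such `t`; the choice `t = α / (2(M + 1))` for small `|α|`
and `t = ±δ/2` for large `|α|` gives the quadratic, resp. linear, lower bound.
-/

open MeasureTheory ProbabilityTheory
open scoped ENNReal

/-- The deviation (Cramér / Legendre) function of a real random variable `ξ`:
`Λ(α) = sup { λ·α − log E[e^{λξ}] : λ ∈ ℝ, E[e^{λξ}] < ∞ }`, as a value in `[0, ∞]`. -/
noncomputable def devFn {Ω : Type*} [MeasurableSpace Ω] (μ : Measure Ω) (ξ : Ω → ℝ)
    (α : ℝ) : ℝ≥0∞ :=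
  ⨆ (l : ℝ) (_ : Integrable (fun ω => Real.exp (l * ξ ω)) μ),
    ENNReal.ofReal (l * α - Real.log (∫ ω, Real.exp (l * ξ ω) ∂μ))

namespace Real

lemma exp_sub_one_sub_le_mul_exp_sub_one (y : ℝ) : exp y - 1 - y ≤ y * (exp y - 1) := by
  have h : exp y * (1 - y) ≤ exp y * exp (-y) :=
    mul_le_mul_of_nonneg_left (one_sub_le_exp_neg y) (exp_pos y).le
  rw [← exp_add, add_neg_cancel, exp_zero] at h
  linarith

lemma mul_exp_sub_one_le_sq_mul_exp_abs (y : ℝ) : y * (exp y - 1) ≤ y ^ 2 * exp |y| := by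
  rcases le_total 0 y with hy | hy
  · have h := exp_sub_one_sub_le_mul_exp_sub_one y
    rw [abs_of_nonneg hy]
    nlinarith [add_one_le_exp y]
  · nlinarith [add_one_le_exp y, one_le_exp (abs_nonneg y), sq_nonneg y]

lemma exp_le_one_add_add_sq_mul_exp_abs (y : ℝ) : exp y ≤ 1 + y + y ^ 2 * exp |y| := by
  linarith [exp_sub_one_sub_le_mul_exp_sub_one y, mul_exp_sub_one_le_sq_mul_exp_abs y]

end Real

open Real

lemma exists_pos_mul_min_sq_abs_le_mul_sub_sq {K s : ℝ} (hK : 0 < K) (hs : 0 < s) :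
    ∃ c > 0, ∀ α : ℝ, ∃ t, |t| ≤ s ∧ c * min (α ^ 2) |α| ≤ t * α - K * t ^ 2 := by
  refine ⟨min (1 / (4 * K)) (s / 2), by positivity, fun α ↦ ?_⟩
  rcases le_or_gt |α| (2 * K * s) with hα | hα
  · refine ⟨α / (2 * K), ?_, ?_⟩
    · rw [abs_div, abs_of_pos (by positivity : (0 : ℝ) < 2 * K), div_le_iff₀ (by positivity)]
      linarith
    · calc min (1 / (4 * K)) (s / 2) * min (α ^ 2) |α| ≤ 1 / (4 * K) * α ^ 2 := by
            gcongr <;> exact min_le_left _ _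
        _ = α / (2 * K) * α - K * (α / (2 * K)) ^ 2 := by field_simp; ring
  · have hlin : min (1 / (4 * K)) (s / 2) * min (α ^ 2) |α| ≤ s * |α| - K * s ^ 2 :=
      calc min (1 / (4 * K)) (s / 2) * min (α ^ 2) |α| ≤ s / 2 * |α| := by
            gcongr <;> exact min_le_right _ _
        _ ≤ s * |α| - K * s ^ 2 := by nlinarith
    rcases le_total 0 α with h | h
    · exact ⟨s, (abs_of_pos hs).le, hlin.trans_eq (by rw [abs_of_nonneg h])⟩
    · exact ⟨-s, by simp [abs_of_pos hs], hlin.trans_eq (by rw [abs_of_nonpos h]; ring)⟩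

namespace ProbabilityTheory

variable {Ω : Type*} [MeasurableSpace Ω] {μ : Measure Ω} {X : Ω → ℝ} {δ s t : ℝ}

lemma integrable_exp_mul_of_integrable_exp_mul_abs (hX : AEMeasurable X μ)
    (h : Integrable (fun ω ↦ exp (δ * |X ω|)) μ) (ht : |t| ≤ δ) :
    Integrable (fun ω ↦ exp (t * X ω)) μ := by
  refine h.mono (by fun_prop) (ae_of_all _ fun ω ↦ ?_)
  simp only [norm_eq_abs, abs_exp, exp_le_exp]
  calc t * X ω ≤ |t| * |X ω| := by rw [← abs_mul]; exact le_abs_self _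
    _ ≤ δ * |X ω| := by gcongr

lemma integrable_sq_mul_exp_mul_abs (hX : AEMeasurable X μ)
    (h : Integrable (fun ω ↦ exp (δ * |X ω|)) μ) (hs : 0 ≤ s) (hsδ : s < δ) :
    Integrable (fun ω ↦ X ω ^ 2 * exp (s * |X ω|)) μ := by
  have hδ : |δ| ≤ δ := (abs_of_pos (hs.trans_lt hsδ)).le
  have h_pos : Integrable (fun ω ↦ exp ((0 + δ) * X ω)) μ := by
    simpa using integrable_exp_mul_of_integrable_exp_mul_abs hX h hδ
  have h_neg : Integrable (fun ω ↦ exp ((0 - δ) * X ω)) μ := by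
    simpa using integrable_exp_mul_of_integrable_exp_mul_abs (t := -δ) hX h (by rwa [abs_neg])
  simpa using integrable_pow_abs_mul_exp_add_of_integrable_exp_mul h_pos h_neg hs
    (hsδ.trans_le (le_abs_self δ)) 2

variable [IsProbabilityMeasure μ]

lemma mgf_le_one_add_mul_integral_add_sq_mul (hX : Integrable X μ)
    (hM : Integrable (fun ω ↦ X ω ^ 2 * exp (s * |X ω|)) μ) (ht : |t| ≤ s) :
    mgf X μ t ≤ 1 + t * μ[X] + t ^ 2 * ∫ ω, X ω ^ 2 * exp (s * |X ω|) ∂μ := by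
  have hpt : ∀ ω, exp (t * X ω) ≤ 1 + t * X ω + t ^ 2 * (X ω ^ 2 * exp (s * |X ω|)) := fun ω ↦
    calc exp (t * X ω) ≤ 1 + t * X ω + (t * X ω) ^ 2 * exp |t * X ω| :=
          exp_le_one_add_add_sq_mul_exp_abs _
      _ ≤ 1 + t * X ω + t ^ 2 * (X ω ^ 2 * exp (s * |X ω|)) := by
          rw [mul_pow, mul_assoc, abs_mul]
          gcongr
  have hlin : Integrable (fun ω ↦ 1 + t * X ω) μ := (integrable_const 1).add (hX.const_mul t)
  have hrhs : Integrable (fun ω ↦ 1 + t * X ω + t ^ 2 * (X ω ^ 2 * exp (s * |X ω|))) μ :=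
    hlin.add (hM.const_mul _)
  calc mgf X μ t ≤ ∫ ω, 1 + t * X ω + t ^ 2 * (X ω ^ 2 * exp (s * |X ω|)) ∂μ :=
        integral_mono_of_nonneg (ae_of_all _ fun ω ↦ (exp_pos _).le) hrhs (ae_of_all _ hpt)
    _ = _ := by
        simp only [integral_add hlin (hM.const_mul _), integral_add (integrable_const _)
          (hX.const_mul t), integral_const_mul, integral_const, probReal_univ, smul_eq_mul, mul_one]

lemma cgf_le_mul_integral_add_sq_mul (hX : Integrable X μ)
    (hM : Integrable (fun ω ↦ X ω ^ 2 * exp (s * |X ω|)) μ) (ht : |t| ≤ s)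
    (hexp : Integrable (fun ω ↦ exp (t * X ω)) μ) :
    cgf X μ t ≤ t * μ[X] + t ^ 2 * ∫ ω, X ω ^ 2 * exp (s * |X ω|) ∂μ :=
  (log_le_sub_one_of_pos (mgf_pos hexp)).trans
    (by linarith [mgf_le_one_add_mul_integral_add_sq_mul hX hM ht])

end ProbabilityTheory

lemma ofReal_mul_sub_cgf_le_devFn {Ω : Type*} [MeasurableSpace Ω] {μ : Measure Ω} {ξ : Ω → ℝ}
    {t : ℝ} (h : Integrable (fun ω ↦ exp (t * ξ ω)) μ) (α : ℝ) :
    ENNReal.ofReal (t * α - cgf ξ μ t) ≤ devFn μ ξ α :=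
  le_iSup₂ (f := fun l (_ : Integrable (fun ω ↦ exp (l * ξ ω)) μ) ↦
    ENNReal.ofReal (l * α - log (∫ ω, exp (l * ξ ω) ∂μ))) t h

theorem devFn_lower_bound_general {Ω : Type*} [MeasurableSpace Ω] (μ : Measure Ω)
    [IsProbabilityMeasure μ] (ξ : Ω → ℝ) (hmeas : Measurable ξ)
    (hC0 : ∃ δ > 0, Integrable (fun ω => Real.exp (δ * |ξ ω|)) μ)
    (hmean : ∫ ω, ξ ω ∂μ = 0) :
    ∃ c > 0, ∀ α : ℝ, ENNReal.ofReal (c * min (α ^ 2) |α|) ≤ devFn μ ξ α := by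
  obtain ⟨δ, hδ, hIδ⟩ := hC0
  have hexp : ∀ t, |t| ≤ δ → Integrable (fun ω ↦ exp (t * ξ ω)) μ :=
    fun t ht ↦ integrable_exp_mul_of_integrable_exp_mul_abs hmeas.aemeasurable hIδ ht
  have hξ : Integrable ξ μ := by
    simpa using integrable_pow_of_integrable_exp_mul hδ.ne' (hexp δ (abs_of_pos hδ).le)
      (hexp (-δ) (by rw [abs_neg, abs_of_pos hδ])) 1
  have hM := integrable_sq_mul_exp_mul_abs hmeas.aemeasurable hIδ (half_pos hδ).le
    (half_lt_self hδ)
  set M := ∫ ω, ξ ω ^ 2 * exp (δ / 2 * |ξ ω|) ∂μ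
  have hM_nonneg : 0 ≤ M := integral_nonneg fun ω ↦ by positivity
  obtain ⟨c, hc, hcα⟩ :=
    exists_pos_mul_min_sq_abs_le_mul_sub_sq (K := M + 1) (by positivity) (half_pos hδ)
  refine ⟨c, hc, fun α ↦ ?_⟩
  obtain ⟨t, hts, ht⟩ := hcα α
  have htδ : |t| ≤ δ := hts.trans (half_le_self hδ.le)
  have hcgf := cgf_le_mul_integral_add_sq_mul hξ hM hts (hexp t htδ)
  rw [hmean, mul_zero, zero_add] at hcgf
  calc ENNReal.ofReal (c * min (α ^ 2) |α|) ≤ ENNReal.ofReal (t * α - cgf ξ μ t) :=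
        ENNReal.ofReal_le_ofReal (by nlinarith [sq_nonneg t])
    _ ≤ devFn μ ξ α := ofReal_mul_sub_cgf_le_devFn (hexp t htδ) α

/-- if `ξ` is nondegenerate, centered and satisfies Cramér's condition `[C₀]`,
then there is `c > 0` with `Λ(α) ≥ c · min{α², |α|}` for all `α`. -/
theorem devFn_lower_bound {Ω : Type*} [MeasurableSpace Ω] (μ : Measure Ω)
    [IsProbabilityMeasure μ] (ξ : Ω → ℝ) (hmeas : Measurable ξ)
    (hnondeg : ¬ ∃ c : ℝ, ξ =ᵐ[μ] fun _ => c)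
    (hC0 : ∃ δ > 0, Integrable (fun ω => Real.exp (δ * |ξ ω|)) μ)
    (hmean : ∫ ω, ξ ω ∂μ = 0) :
    ∃ c > 0, ∀ α : ℝ, ENNReal.ofReal (c * min (α ^ 2) |α|) ≤ devFn μ ξ α :=
  devFn_lower_bound_general μ ξ hmeas hC0 hmean
end

section
/- Let ξ be a real random variable satisfying Cramér's condition [C₀], with deviation function Λ and Cramér interval endpoints λ₊, λ₋. Then for every U > 0 and every right-continuous function f of bounded variation on [0, U] with f(0) = 0, one has J₀^U(f) ≥ U · Λ(f(U)/U). -/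
open MeasureTheory ProbabilityTheory Filter Set
open scoped ENNReal

/-- `λ₊ = sup{λ : ψ(λ) < ∞}`, viewed in `[0,∞]` (it is positive under `[C₀]`). -/
noncomputable def lamPlus {Ω : Type*} [MeasurableSpace Ω] (μ : Measure Ω) (ξ : Ω → ℝ) : ℝ≥0∞ :=
  ⨆ (l : ℝ) (_ : Integrable (fun ω => Real.exp (l * ξ ω)) μ), ENNReal.ofReal l

/-- `|λ₋| = -inf{λ : ψ(λ) < ∞}`, viewed in `[0,∞]` (it is positive under `[C₀]`). -/
noncomputable def lamMinusAbs {Ω : Type*} [MeasurableSpace Ω] (μ : Measure Ω) (ξ : Ω → ℝ) :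
    ℝ≥0∞ :=
  ⨆ (l : ℝ) (_ : Integrable (fun ω => Real.exp (l * ξ ω)) μ), ENNReal.ofReal (-l)

/-- The functional `J₀^U` evaluated on (the Lebesgue–Stieltjes signed measure `ν` of) a
right-continuous function of bounded variation `f` with `f(0) = 0`, `f(t) = ν((0,t])`:
`J₀^U(f) = ∫₀^U Λ(f_a'(t)) dt + λ₊ · μ_s⁺((0,U]) + |λ₋| · μ_s⁻((0,U])`,
where `f_a'` is the Radon–Nikodym density of `ν` w.r.t. Lebesgue measure and
`μ_s⁺ − μ_s⁻` is the Jordan decomposition of the singular part of `ν`. -/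
noncomputable def J0 {Ω : Type*} [MeasurableSpace Ω] (μ : Measure Ω) (ξ : Ω → ℝ)
    (ν : SignedMeasure ℝ) (U : ℝ) : ℝ≥0∞ :=
  (∫⁻ t in Set.Ioc (0 : ℝ) U, devFn μ ξ (ν.rnDeriv volume t)) +
    lamPlus μ ξ * (ν.singularPart volume).toJordanDecomposition.posPart (Set.Ioc (0 : ℝ) U) +
    lamMinusAbs μ ξ * (ν.singularPart volume).toJordanDecomposition.negPart (Set.Ioc (0 : ℝ) U)

/-! For every `λ` with `ψ(λ) < ∞`, the Lebesgue decomposition of `ν` splits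
`λ f(U) - U log ψ(λ)` into `∫₀^U (λ f_a'(t) - log ψ(λ)) dt`, whose integrand is at most
`Λ(f_a'(t))`, plus `λ (μ_s⁺ - μ_s⁻)((0,U])`, which is at most `λ₊ μ_s⁺((0,U]) + |λ₋| μ_s⁻((0,U])`.
Taking the supremum over `λ` gives `U Λ(f(U)/U) ≤ J₀^U(f)`. -/

section CramerBounds

variable {Ω : Type*} [MeasurableSpace Ω] {μ : Measure Ω} {ξ : Ω → ℝ} {l : ℝ}

theorem ofReal_mul_sub_log_le_devFn (hl : Integrable (fun ω => Real.exp (l * ξ ω)) μ) (α : ℝ) :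
    ENNReal.ofReal (l * α - Real.log (∫ ω, Real.exp (l * ξ ω) ∂μ)) ≤ devFn μ ξ α :=
  le_iSup₂ (f := fun l' (_ : Integrable (fun ω => Real.exp (l' * ξ ω)) μ) =>
    ENNReal.ofReal (l' * α - Real.log (∫ ω, Real.exp (l' * ξ ω) ∂μ))) l hl

theorem ofReal_le_lamPlus (hl : Integrable (fun ω => Real.exp (l * ξ ω)) μ) :
    ENNReal.ofReal l ≤ lamPlus μ ξ :=
  le_iSup₂ (f := fun l' (_ : Integrable (fun ω => Real.exp (l' * ξ ω)) μ) =>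
    ENNReal.ofReal l') l hl

theorem ofReal_neg_le_lamMinusAbs (hl : Integrable (fun ω => Real.exp (l * ξ ω)) μ) :
    ENNReal.ofReal (-l) ≤ lamMinusAbs μ ξ :=
  le_iSup₂ (f := fun l' (_ : Integrable (fun ω => Real.exp (l' * ξ ω)) μ) =>
    ENNReal.ofReal (-l')) l hl

end CramerBounds

theorem MeasureTheory.ofReal_integral_le_lintegral_ofReal {α : Type*} [MeasurableSpace α]
    {ρ : Measure α} (g : α → ℝ) :
    ENNReal.ofReal (∫ a, g a ∂ρ) ≤ ∫⁻ a, ENNReal.ofReal (g a) ∂ρ := by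
  by_cases hg : Integrable g ρ
  · refine ENNReal.ofReal_le_of_le_toReal ?_
    rw [integral_eq_lintegral_pos_part_sub_lintegral_neg_part hg]
    exact sub_le_self _ ENNReal.toReal_nonneg
  · simp [integral_undef hg]

namespace MeasureTheory.SignedMeasure

variable {α : Type*} [MeasurableSpace α]

theorem ofReal_mul_apply_le (s : SignedMeasure α) {A : Set α} (hA : MeasurableSet A) (l : ℝ) :
    ENNReal.ofReal (l * s A) ≤ ENNReal.ofReal l * s.toJordanDecomposition.posPart A +
      ENNReal.ofReal (-l) * s.toJordanDecomposition.negPart A := by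
  set P := s.toJordanDecomposition.posPart
  set N := s.toJordanDecomposition.negPart
  rw [s.apply_eq_posPart_real_sub_negPart_real hA]
  rcases le_total 0 l with hl | hl
  · calc ENNReal.ofReal (l * (P.real A - N.real A))
        ≤ ENNReal.ofReal (l * P.real A) := by
          gcongr
          exact sub_le_self _ measureReal_nonneg
      _ = ENNReal.ofReal l * P A := by
          rw [ENNReal.ofReal_mul hl, ofReal_measureReal (measure_ne_top P A)]
      _ ≤ _ := le_self_add
  · calc ENNReal.ofReal (l * (P.real A - N.real A))
        ≤ ENNReal.ofReal (-l * N.real A) :=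
          ENNReal.ofReal_le_ofReal (by nlinarith [measureReal_nonneg (μ := P) (s := A)])
      _ = ENNReal.ofReal (-l) * N A := by
          rw [ENNReal.ofReal_mul (neg_nonneg.2 hl), ofReal_measureReal (measure_ne_top N A)]
      _ ≤ _ := le_add_self

theorem apply_eq_singularPart_add_setIntegral_rnDeriv (ν : SignedMeasure α) (ρ : Measure α)
    [ν.HaveLebesgueDecomposition ρ] {A : Set α} (hA : MeasurableSet A) :
    ν A = ν.singularPart ρ A + ∫ t in A, ν.rnDeriv ρ t ∂ρ := by
  conv_lhs => rw [← ν.singularPart_add_withDensity_rnDeriv_eq (μ := ρ)]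
  rw [add_apply, withDensityᵥ_apply (ν.integrable_rnDeriv ρ) hA]

end MeasureTheory.SignedMeasure

theorem ofReal_mul_sub_log_le_J0 {Ω : Type*} [MeasurableSpace Ω] {μ : Measure Ω} {ξ : Ω → ℝ}
    {l : ℝ} (hl : Integrable (fun ω => Real.exp (l * ξ ω)) μ) (ν : SignedMeasure ℝ) {U : ℝ}
    (hU : 0 ≤ U) :
    ENNReal.ofReal (l * ν (Ioc 0 U) - U * Real.log (∫ ω, Real.exp (l * ξ ω) ∂μ)) ≤
      J0 μ ξ ν U := by
  set L := Real.log (∫ ω, Real.exp (l * ξ ω) ∂μ)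
  set d := ν.rnDeriv volume
  set s := ν.singularPart volume
  have hd : IntegrableOn d (Ioc 0 U) := (ν.integrable_rnDeriv volume).integrableOn
  have hsplit : l * ν (Ioc 0 U) - U * L = (∫ t in Ioc 0 U, (l * d t - L)) + l * s (Ioc 0 U) := by
    rw [ν.apply_eq_singularPart_add_setIntegral_rnDeriv volume measurableSet_Ioc,
      integral_sub (hd.const_mul l) (integrable_const L), integral_const_mul, setIntegral_const,
      Real.volume_real_Ioc_of_le hU, sub_zero, smul_eq_mul]
    ring
  have hacPart : ENNReal.ofReal (∫ t in Ioc 0 U, (l * d t - L)) ≤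
      ∫⁻ t in Ioc 0 U, devFn μ ξ (d t) :=
    (ofReal_integral_le_lintegral_ofReal _).trans
      (lintegral_mono fun t => ofReal_mul_sub_log_le_devFn hl (d t))
  calc ENNReal.ofReal (l * ν (Ioc 0 U) - U * L)
      ≤ ENNReal.ofReal (∫ t in Ioc 0 U, (l * d t - L)) + ENNReal.ofReal (l * s (Ioc 0 U)) := by
        rw [hsplit]
        exact ENNReal.ofReal_add_le
    _ ≤ (∫⁻ t in Ioc 0 U, devFn μ ξ (d t)) +
        (ENNReal.ofReal l * s.toJordanDecomposition.posPart (Ioc 0 U) +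
          ENNReal.ofReal (-l) * s.toJordanDecomposition.negPart (Ioc 0 U)) :=
        add_le_add hacPart (s.ofReal_mul_apply_le measurableSet_Ioc l)
    _ ≤ J0 μ ξ ν U := by
        rw [J0, add_assoc]
        gcongr
        exacts [ofReal_le_lamPlus hl, ofReal_neg_le_lamMinusAbs hl]

theorem J0_ge_of_endpoint_general {Ω : Type*} [MeasurableSpace Ω] (μ : Measure Ω) (ξ : Ω → ℝ)
    (U : ℝ) (hU : 0 < U) (f : ℝ → ℝ) (ν : SignedMeasure ℝ)
    (hf : ∀ t ∈ Set.Icc (0 : ℝ) U, f t = ν (Set.Ioc (0 : ℝ) t)) :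
    ENNReal.ofReal U * devFn μ ξ (f U / U) ≤ J0 μ ξ ν U := by
  simp only [devFn, ENNReal.mul_iSup]
  refine iSup₂_le fun l hl => ?_
  have hscale : U * (l * (f U / U) - Real.log (∫ ω, Real.exp (l * ξ ω) ∂μ)) =
      l * ν (Ioc 0 U) - U * Real.log (∫ ω, Real.exp (l * ξ ω) ∂μ) := by
    rw [← hf U ⟨hU.le, le_rfl⟩]
    field_simp
  rw [← ENNReal.ofReal_mul hU.le, hscale]
  exact ofReal_mul_sub_log_le_J0 hl ν hU.le

/-- under `[C₀]`, for every `U > 0` and every right-continuous function `f` of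
bounded variation on `[0,U]` with `f(0) = 0` (represented by its Lebesgue–Stieltjes signed
measure `ν` via `f(t) = ν((0,t])`), one has `J₀^U(f) ≥ U · Λ(f(U)/U)`. -/
theorem J0_ge_of_endpoint {Ω : Type*} [MeasurableSpace Ω] (μ : Measure Ω)
    [IsProbabilityMeasure μ] (ξ : Ω → ℝ) (hmeas : Measurable ξ)
    (hC0 : ∃ δ > 0, Integrable (fun ω => Real.exp (δ * |ξ ω|)) μ)
    (U : ℝ) (hU : 0 < U) (f : ℝ → ℝ) (ν : SignedMeasure ℝ)
    (hf : ∀ t ∈ Set.Icc (0 : ℝ) U, f t = ν (Set.Ioc (0 : ℝ) t)) :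
    ENNReal.ofReal U * devFn μ ξ (f U / U) ≤ J0 μ ξ ν U :=
  J0_ge_of_endpoint_general μ ξ U hU f ν hf
end

section
/- Let ξ(t) be a compound Poisson process whose jump variable Y satisfies E[e^{δ|Y|}] < ∞ for some δ > 0 and E[Y] = 0. Then for every N < ∞ and every U < ∞ there exists V < ∞ such that limsup_{T → ∞} (1/T) · log P( there exists t ∈ [0, 2U] with |ξ(tT)|/T > V(1 + t) ) ≤ −N. -/
open MeasureTheory ProbabilityTheory Filter Set
open scoped ENNReal

/-- The Poisson counting process `N(t) = #{k ≥ 1 : τ₁ + ⋯ + τ_k ≤ t}` built from the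
interarrival times `τ₁, τ₂, …` (here `τ i` is the `(i+1)`-st interarrival time). -/
noncomputable def countProc {Ω : Type*} (τ : ℕ → Ω → ℝ) (t : ℝ) (ω : Ω) : ℕ :=
  Nat.card {k : ℕ | 1 ≤ k ∧ ∑ i ∈ Finset.range k, τ i ω ≤ t}

/-- The compound Poisson process `ξ(t) = Σ_{i=1}^{N(t)} Y_i` with interarrival times `τ`
and jumps `Y`. -/
noncomputable def cpp {Ω : Type*} (τ Y : ℕ → Ω → ℝ) (t : ℝ) (ω : Ω) : ℝ :=
  ∑ i ∈ Finset.range (countProc τ t ω), Y i ω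

/-! Fix `a ≥ 0` and put `n = ⌈a T⌉₊`. On the event, `VT < |ξ(tT)|` for some `tT ≤ 2UT`, so
either at most `n` jumps occurred by then and `VT < |Y₁| + ⋯ + |Yₙ|`, or at least `n + 1`
jumps occurred and `τ₁ + ⋯ + τₙ₊₁ ≤ 2UT`. Chernoff's bound at `δ` bounds the first probability
by `exp(-δVT + n Λ)`, with `Λ` the cumulant generating function of `|Y|` at `δ`, and Chernoff's
bound at `-1` bounds the second one by `exp(2UT + (n+1) Λ')` with `Λ' = log E e^{-τ} < 0`.
Taking `a` large makes the second bound `≤ e^{-NT}`, and then `V` large does the same for the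
first. -/

section Pathwise

variable {Ω : Type*} {τ : ℕ → Ω → ℝ} {ω : Ω}

lemma sum_range_succ_le_of_lt_countProc (hτ : ∀ i, 0 ≤ τ i ω) {n : ℕ} {s : ℝ}
    (h : n < countProc τ s ω) : ∑ i ∈ Finset.range (n + 1), τ i ω ≤ s := by
  set K : Set ℕ := {k | 1 ≤ k ∧ ∑ i ∈ Finset.range k, τ i ω ≤ s}
  obtain ⟨k, hkK, hnk⟩ : ∃ k ∈ K, n + 1 ≤ k := by
    by_contra! hK
    have hsub : K ⊆ Set.Icc 1 n := fun k hk => ⟨hk.1, Nat.lt_succ_iff.1 (hK k hk)⟩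
    have : Nat.card K ≤ n := by
      simpa using Set.ncard_le_ncard hsub (Set.finite_Icc 1 n)
    exact (h.trans_le this).false
  calc ∑ i ∈ Finset.range (n + 1), τ i ω ≤ ∑ i ∈ Finset.range k, τ i ω :=
        Finset.sum_le_sum_of_subset_of_nonneg (Finset.range_subset_range.2 hnk)
          fun i _ _ => hτ i
    _ ≤ s := hkK.2

lemma abs_cpp_le_or_sum_range_succ_le (Y : ℕ → Ω → ℝ) (hτ : ∀ i, 0 ≤ τ i ω) (n : ℕ)
    (s : ℝ) :
    |cpp τ Y s ω| ≤ ∑ i ∈ Finset.range n, |Y i ω| ∨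
      ∑ i ∈ Finset.range (n + 1), τ i ω ≤ s := by
  rcases le_or_gt (countProc τ s ω) n with hle | hlt
  · refine Or.inl ((Finset.abs_sum_le_sum_abs _ _).trans ?_)
    exact Finset.sum_le_sum_of_subset_of_nonneg (Finset.range_subset_range.2 hle)
      fun i _ _ => abs_nonneg _
  · exact Or.inr (sum_range_succ_le_of_lt_countProc hτ hlt)

end Pathwise

section Chernoff

variable {Ω : Type*} [MeasurableSpace Ω] {μ : Measure Ω} {X : ℕ → Ω → ℝ} {t : ℝ}

lemma cgf_sum_range_of_identDistrib (hmeas : ∀ i, Measurable (X i)) (hindep : iIndepFun X μ)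
    (hident : ∀ i, IdentDistrib (X i) (X 0) μ μ)
    (hint : Integrable (fun ω => Real.exp (t * X 0 ω)) μ) (n : ℕ) :
    cgf (∑ i ∈ Finset.range n, X i) μ t = n * cgf (X 0) μ t := by
  have hint' : ∀ i, Integrable (fun ω => Real.exp (t * X i ω)) μ := fun i =>
    ((hident i).comp (measurable_const_mul t).exp).integrable_iff.2 hint
  have hcgf : ∀ i, cgf (X i) μ t = cgf (X 0) μ t := fun i => by
    simp only [cgf, mgf_congr_identDistrib (hident i)]
  simp only [hindep.cgf_sum hmeas fun i _ => hint' i, hcgf, Finset.sum_const,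
    Finset.card_range, nsmul_eq_mul]

lemma measure_sum_range_ge_le_exp_cgf (hmeas : ∀ i, Measurable (X i)) (hindep : iIndepFun X μ)
    (hident : ∀ i, IdentDistrib (X i) (X 0) μ μ) (ht : 0 ≤ t)
    (hint : Integrable (fun ω => Real.exp (t * X 0 ω)) μ) (n : ℕ) (ε : ℝ) :
    μ.real {ω | ε ≤ ∑ i ∈ Finset.range n, X i ω} ≤
      Real.exp (-t * ε + n * cgf (X 0) μ t) := by
  have := hindep.isProbabilityMeasure
  have hint_sum := hindep.integrable_exp_mul_sum hmeas (s := Finset.range n) fun i _ =>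
    ((hident i).comp (measurable_const_mul t).exp).integrable_iff.2 hint
  have := measure_ge_le_exp_cgf ε ht hint_sum
  simpa only [Finset.sum_apply, cgf_sum_range_of_identDistrib hmeas hindep hident hint] using this

lemma measure_sum_range_le_le_exp_cgf (hmeas : ∀ i, Measurable (X i)) (hindep : iIndepFun X μ)
    (hident : ∀ i, IdentDistrib (X i) (X 0) μ μ) (ht : t ≤ 0)
    (hint : Integrable (fun ω => Real.exp (t * X 0 ω)) μ) (n : ℕ) (ε : ℝ) :
    μ.real {ω | ∑ i ∈ Finset.range n, X i ω ≤ ε} ≤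
      Real.exp (-t * ε + n * cgf (X 0) μ t) := by
  have := hindep.isProbabilityMeasure
  have hint_sum := hindep.integrable_exp_mul_sum hmeas (s := Finset.range n) fun i _ =>
    ((hident i).comp (measurable_const_mul t).exp).integrable_iff.2 hint
  have := measure_le_le_exp_cgf ε ht hint_sum
  simpa only [Finset.sum_apply, cgf_sum_range_of_identDistrib hmeas hindep hident hint] using this

end Chernoff

section Sign

variable {Ω : Type*} [MeasurableSpace Ω] {μ : Measure Ω} {X : Ω → ℝ} {t : ℝ}

lemma expMeasure_Iic_zero (r : ℝ) : expMeasure r (Iic 0) = 0 := by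
  rw [expMeasure, gammaMeasure, withDensity_apply _ measurableSet_Iic,
    setLIntegral_congr Iio_ae_eq_Iic.symm]
  exact lintegral_exponentialPDF_of_nonpos le_rfl

lemma ae_pos_of_map_eq_expMeasure {r : ℝ} (hX : AEMeasurable X μ)
    (h : μ.map X = expMeasure r) : ∀ᵐ ω ∂μ, 0 < X ω := by
  refine ae_of_ae_map hX ?_
  rw [h, ae_iff]
  simpa only [not_lt, Iic_def] using expMeasure_Iic_zero r

lemma integrable_exp_mul_of_nonpos_of_ae_nonneg [IsFiniteMeasure μ] (hX : AEMeasurable X μ)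
    (hX0 : ∀ᵐ ω ∂μ, 0 ≤ X ω) (ht : t ≤ 0) : Integrable (fun ω => Real.exp (t * X ω)) μ :=
  .of_mem_Icc 0 1 (Real.measurable_exp.comp_aemeasurable (hX.const_mul t)) (hX0.mono fun _ hω =>
    ⟨(Real.exp_pos _).le, Real.exp_le_one_iff.2 (mul_nonpos_of_nonpos_of_nonneg ht hω)⟩)

lemma cgf_nonneg_of_ae_nonneg [IsProbabilityMeasure μ] (hX0 : ∀ᵐ ω ∂μ, 0 ≤ X ω) (ht : 0 ≤ t)
    (hint : Integrable (fun ω => Real.exp (t * X ω)) μ) : 0 ≤ cgf X μ t := by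
  refine Real.log_nonneg ?_
  simpa [mgf] using integral_mono_ae (integrable_const 1) hint
    (hX0.mono fun _ hω => Real.one_le_exp (mul_nonneg ht hω))

lemma cgf_neg_of_ae_pos [IsProbabilityMeasure μ] (hX : AEMeasurable X μ)
    (hpos : ∀ᵐ ω ∂μ, 0 < X ω) (ht : t < 0) : cgf X μ t < 0 := by
  have hint := integrable_exp_mul_of_nonpos_of_ae_nonneg hX (hpos.mono fun _ => le_of_lt) ht.le
  have hlt : ∀ᵐ ω ∂μ, Real.exp (t * X ω) < 1 :=
    hpos.mono fun ω hω => Real.exp_lt_one_iff.2 (mul_neg_of_neg_of_pos ht hω)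
  have hmgf : mgf X μ t < 1 := by
    by_contra! h
    refine (measure_integral_le_pos hint).ne' (measure_mono_null (fun ω hω => ?_) (ae_iff.1 hlt))
    exact not_lt.2 (h.trans hω)
  exact Real.log_neg (mgf_pos hint) hmgf

end Sign

lemma limsup_inv_mul_log_le_of_le_exp {p : ℝ → ℝ≥0∞} {C a : ℝ} (hC : 0 < C)
    (h : ∀ᶠ T in atTop, p T ≤ ENNReal.ofReal (C * Real.exp (a * T))) :
    limsup (fun T : ℝ => ((T⁻¹ : ℝ) : EReal) * ENNReal.log (p T)) atTop ≤ (a : EReal) := by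
  refine EReal.le_of_forall_lt_iff_le.1 fun z hz => ?_
  have hza : 0 < z - a := sub_pos.2 (EReal.coe_lt_coe_iff.1 hz)
  refine limsup_le_of_le (by isBoundedDefault) ?_
  filter_upwards [h, eventually_gt_atTop 0, eventually_ge_atTop (Real.log C / (z - a))]
    with T hpT hT hTC
  have hlogC : Real.log C ≤ (z - a) * T := (div_le_iff₀' hza).1 hTC
  calc ((T⁻¹ : ℝ) : EReal) * ENNReal.log (p T)
      ≤ ((T⁻¹ : ℝ) : EReal) * ENNReal.log (ENNReal.ofReal (C * Real.exp (a * T))) :=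
        mul_le_mul_of_nonneg_left (ENNReal.log_le_log hpT) (by exact_mod_cast (inv_pos.2 hT).le)
    _ = ((T⁻¹ * (Real.log C + a * T) : ℝ) : EReal) := by
        rw [ENNReal.log_ofReal_of_pos (by positivity), Real.log_mul hC.ne' (Real.exp_ne_zero _),
          Real.log_exp, EReal.coe_mul]
    _ ≤ z := by
        rw [EReal.coe_le_coe_iff, inv_mul_le_iff₀ hT]
        linarith

section Estimate

variable {Ω : Type*} [MeasurableSpace Ω] {μ : Measure Ω} {τ Y : ℕ → Ω → ℝ}

lemma measure_exists_lt_abs_cpp_le_add (hτ : ∀ᵐ ω ∂μ, ∀ i, 0 ≤ τ i ω) {V T : ℝ} (hV : 0 ≤ V)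
    (hT : 0 < T) (U : ℝ) (n : ℕ) :
    μ {ω | ∃ t ∈ Icc (0 : ℝ) (2 * U), V * (1 + t) < |cpp τ Y (t * T) ω| / T} ≤
      μ {ω | V * T ≤ ∑ i ∈ Finset.range n, |Y i ω|} +
        μ {ω | ∑ i ∈ Finset.range (n + 1), τ i ω ≤ 2 * U * T} := by
  refine (measure_mono_ae ?_).trans (measure_union_le _ _)
  filter_upwards [hτ] with ω hω ⟨t, ⟨ht0, htU⟩, hlt⟩
  have hVT : V * T < |cpp τ Y (t * T) ω| := by
    rw [lt_div_iff₀ hT] at hlt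
    nlinarith [mul_nonneg (mul_nonneg hV ht0) hT.le]
  rcases abs_cpp_le_or_sum_range_succ_le Y hω n (t * T) with h | h
  · exact Or.inl (hVT.le.trans h)
  · exact Or.inr (h.trans (mul_le_mul_of_nonneg_right htU hT.le))

lemma exists_measure_exists_lt_abs_cpp_le [IsFiniteMeasure μ] (hτ : ∀ᵐ ω ∂μ, ∀ i, 0 ≤ τ i ω)
    {δ K L : ℝ} (hδ : 0 < δ) (hK : 0 ≤ K) (hL : L < 0)
    (hY : ∀ (n : ℕ) (ε : ℝ), μ.real {ω | ε ≤ ∑ i ∈ Finset.range n, |Y i ω|} ≤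
      Real.exp (-δ * ε + n * K))
    (hτL : ∀ (n : ℕ) (ε : ℝ), μ.real {ω | ∑ i ∈ Finset.range n, τ i ω ≤ ε} ≤
      Real.exp (ε + n * L))
    (N U : ℝ) : ∃ V : ℝ, ∀ T > 0,
      μ {ω | ∃ t ∈ Icc (0 : ℝ) (2 * U), V * (1 + t) < |cpp τ Y (t * T) ω| / T} ≤
        ENNReal.ofReal ((Real.exp K + 1) * Real.exp (-N * T)) := by
  obtain ⟨a, ha0, haL⟩ : ∃ a : ℝ, 0 ≤ a ∧ 2 * U + a * L ≤ -N :=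
    ⟨max 0 ((2 * U + N) / -L), le_max_left _ _, by
      nlinarith [(div_le_iff₀ (neg_pos.2 hL)).1 (le_max_right 0 ((2 * U + N) / -L))]⟩
  obtain ⟨V, hV0, hVK⟩ : ∃ V : ℝ, 0 ≤ V ∧ a * K - δ * V ≤ -N :=
    ⟨max 0 ((a * K + N) / δ), le_max_left _ _, by
      nlinarith [(div_le_iff₀ hδ).1 (le_max_right 0 ((a * K + N) / δ))]⟩
  refine ⟨V, fun T hT => ?_⟩
  set n := ⌈a * T⌉₊
  have hn : a * T ≤ n := Nat.le_ceil _
  have hn' : (n : ℝ) ≤ a * T + 1 := (Nat.ceil_lt_add_one (by positivity)).le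
  have hA : μ {ω | V * T ≤ ∑ i ∈ Finset.range n, |Y i ω|} ≤
      ENNReal.ofReal (Real.exp K * Real.exp (-N * T)) := by
    rw [← ofReal_measureReal (measure_ne_top _ _), ← Real.exp_add]
    refine ENNReal.ofReal_le_ofReal ((hY n (V * T)).trans (Real.exp_le_exp.2 ?_))
    nlinarith [mul_le_mul_of_nonneg_right hVK hT.le, mul_le_mul_of_nonneg_right hn' hK]
  have hB : μ {ω | ∑ i ∈ Finset.range (n + 1), τ i ω ≤ 2 * U * T} ≤
      ENNReal.ofReal (Real.exp (-N * T)) := by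
    rw [← ofReal_measureReal (measure_ne_top _ _)]
    refine ENNReal.ofReal_le_ofReal ((hτL (n + 1) (2 * U * T)).trans (Real.exp_le_exp.2 ?_))
    push_cast
    nlinarith [mul_le_mul_of_nonneg_right haL hT.le, mul_le_mul_of_nonpos_right hn hL.le]
  calc _ ≤ _ := measure_exists_lt_abs_cpp_le_add hτ hV0 hT U n
    _ ≤ _ := add_le_add hA hB
    _ = _ := by rw [← ENNReal.ofReal_add (by positivity) (by positivity), add_mul, one_mul]

end Estimate

theorem cpp_sup_limsup_le_general {Ω : Type*} [MeasurableSpace Ω] (μ : Measure Ω)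
    [IsProbabilityMeasure μ] (τ Y : ℕ → Ω → ℝ) (r : ℝ)
    (hτmeas : ∀ i, Measurable (τ i)) (hYmeas : ∀ i, Measurable (Y i))
    (hindep : iIndepFun (Sum.elim τ Y) μ)
    (hτdist : ∀ i, Measure.map (τ i) μ = expMeasure r)
    (hYdist : ∀ i, Measure.map (Y i) μ = Measure.map (Y 0) μ)
    (hC0 : ∃ δ > 0, Integrable (fun ω => Real.exp (δ * |Y 0 ω|)) μ) :
    ∀ N : ℝ, ∀ U : ℝ, ∃ V : ℝ,
      Filter.limsup
        (fun T : ℝ => ((T⁻¹ : ℝ) : EReal) *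
          ENNReal.log (μ {ω | ∃ t ∈ Set.Icc (0 : ℝ) (2 * U),
            V * (1 + t) < |cpp τ Y (t * T) ω| / T}))
        Filter.atTop ≤ ((-N : ℝ) : EReal) := by
  intro N U
  obtain ⟨δ, hδ, hint⟩ := hC0
  have hτindep : iIndepFun τ μ := hindep.precomp (g := Sum.inl) Sum.inl_injective
  have hZindep : iIndepFun (fun i ω => |Y i ω|) μ :=
    (hindep.precomp (g := Sum.inr) Sum.inr_injective).comp _ fun _ => measurable_abs
  have hτident : ∀ i, IdentDistrib (τ i) (τ 0) μ μ := fun i =>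
    ⟨(hτmeas i).aemeasurable, (hτmeas 0).aemeasurable, (hτdist i).trans (hτdist 0).symm⟩
  have hZident : ∀ i, IdentDistrib (fun ω => |Y i ω|) (fun ω => |Y 0 ω|) μ μ := fun i =>
    IdentDistrib.comp ⟨(hYmeas i).aemeasurable, (hYmeas 0).aemeasurable, hYdist i⟩ measurable_abs
  have hτpos : ∀ i, ∀ᵐ ω ∂μ, 0 < τ i ω := fun i =>
    ae_pos_of_map_eq_expMeasure (hτmeas i).aemeasurable (hτdist i)
  have hτnonneg : ∀ᵐ ω ∂μ, ∀ i, 0 ≤ τ i ω :=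
    ae_all_iff.2 fun i => (hτpos i).mono fun _ => le_of_lt
  obtain ⟨V, hV⟩ := exists_measure_exists_lt_abs_cpp_le
    hτnonneg hδ (cgf_nonneg_of_ae_nonneg (ae_of_all _ fun ω => abs_nonneg _) hδ.le hint)
    (cgf_neg_of_ae_pos (hτmeas 0).aemeasurable (hτpos 0) neg_one_lt_zero)
    (measure_sum_range_ge_le_exp_cgf (fun i => (hYmeas i).abs) hZindep hZident hδ.le hint)
    (fun n ε => by
      simpa using measure_sum_range_le_le_exp_cgf (t := -1) hτmeas hτindep hτident (by norm_num)
        (integrable_exp_mul_of_nonpos_of_ae_nonneg (hτmeas 0).aemeasurable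
          ((ae_all_iff.1 hτnonneg) 0) (by norm_num)) n ε)
    N U
  refine ⟨V, limsup_inv_mul_log_le_of_le_exp ?_ ((eventually_gt_atTop 0).mono hV)⟩
  positivity

/-- for a compound Poisson process `ξ(t)` whose centered jump variable has a
finite exponential moment, for every `N` and `U` there is `V` with
`limsup_{T→∞} (1/T) log P(∃ t ∈ [0,2U], |ξ(tT)|/T > V(1+t)) ≤ −N`. -/
theorem cpp_sup_limsup_le {Ω : Type*} [MeasurableSpace Ω] (μ : Measure Ω)
    [IsProbabilityMeasure μ] (τ Y : ℕ → Ω → ℝ) (r : ℝ) (hr : 0 < r)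
    (hτmeas : ∀ i, Measurable (τ i)) (hYmeas : ∀ i, Measurable (Y i))
    (hindep : iIndepFun (Sum.elim τ Y) μ)
    (hτdist : ∀ i, Measure.map (τ i) μ = expMeasure r)
    (hYdist : ∀ i, Measure.map (Y i) μ = Measure.map (Y 0) μ)
    (hC0 : ∃ δ > 0, Integrable (fun ω => Real.exp (δ * |Y 0 ω|)) μ)
    (hmean : ∫ ω, Y 0 ω ∂μ = 0) :
    ∀ N : ℝ, ∀ U : ℝ, ∃ V : ℝ,
      Filter.limsup
        (fun T : ℝ => ((T⁻¹ : ℝ) : EReal) *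
          ENNReal.log (μ {ω | ∃ t ∈ Set.Icc (0 : ℝ) (2 * U),
            V * (1 + t) < |cpp τ Y (t * T) ω| / T}))
        Filter.atTop ≤ ((-N : ℝ) : EReal) :=
  cpp_sup_limsup_le_general μ τ Y r hτmeas hYmeas hindep hτdist hYdist hC0
end
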